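/- arXiv:2602.08119 — 2 statements merged into one kernel-verified Lean document; each statement's English description precedes it below -/
import Mathlib

section
/- Let m ≥ 1, and for each i ∈ {1,…,m} let a_i ∈ ℝ and b_i > 0. Define the transformed MNL revenue function R(u) = (∑_{i=1}^m (1/b_i) · u_i · (a_i − ln u_i)) / (1 + ∑_{j=1}^m u_j) for u in the open positive orthant ℝ_{>0}^m. Then R is strictly quasiconcave on ℝ_{>0}^m: for all u, w ∈ ℝ_{>0}^m with u ≠ w and all t ∈ (0,1), R(t·u + (1−t)·w) > min(R(u), R(w)). -/
private lemma mnl_aux_le (c aa t x y : ℝ) (hc : 0 < c) (hx : 0 ≤ x) (hy : 0 ≤ y)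
    (ht0 : 0 ≤ t) (ht1 : t ≤ 1) :
    t * (c * x * (aa - Real.log x)) + (1 - t) * (c * y * (aa - Real.log y)) ≤
      c * (t * x + (1 - t) * y) * (aa - Real.log (t * x + (1 - t) * y)) := by
  have h := Real.convexOn_mul_log.2 (Set.mem_Ici.mpr hx) (Set.mem_Ici.mpr hy)
    ht0 (show (0:ℝ) ≤ 1 - t by linarith) (by ring)
  simp only [smul_eq_mul] at h
  nlinarith [mul_le_mul_of_nonneg_left h hc.le]

private lemma mnl_aux_lt (c aa t x y : ℝ) (hc : 0 < c) (hx : 0 ≤ x) (hy : 0 ≤ y)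
    (hxy : x ≠ y) (ht0 : 0 < t) (ht1 : t < 1) :
    t * (c * x * (aa - Real.log x)) + (1 - t) * (c * y * (aa - Real.log y)) <
      c * (t * x + (1 - t) * y) * (aa - Real.log (t * x + (1 - t) * y)) := by
  have h := Real.strictConvexOn_mul_log.2 (Set.mem_Ici.mpr hx) (Set.mem_Ici.mpr hy)
    hxy ht0 (show (0:ℝ) < 1 - t by linarith) (by ring)
  simp only [smul_eq_mul] at h
  nlinarith [mul_lt_mul_of_pos_left h hc]

/-- Strict quasiconcavity of the transformed MNL revenue function
`R(u) = (∑ i, (1/b i) * u i * (a i - ln (u i))) / (1 + ∑ j, u j)`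
on the open positive orthant. -/
theorem transformed_MNL_revenue_strictly_quasiconcave
    (m : ℕ) (hm : 1 ≤ m) (a b : Fin m → ℝ) (hb : ∀ i, 0 < b i)
    (R : (Fin m → ℝ) → ℝ)
    (hR : ∀ u : Fin m → ℝ,
      R u = (∑ i, (1 / b i) * u i * (a i - Real.log (u i))) / (1 + ∑ j, u j)) :
    ∀ u w : Fin m → ℝ, (∀ i, 0 < u i) → (∀ i, 0 < w i) → u ≠ w →
      ∀ t : ℝ, t ∈ Set.Ioo (0 : ℝ) 1 →
        min (R u) (R w) < R (fun i => t * u i + (1 - t) * w i) := by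
  intro u w hu hw hne t ht
  obtain ⟨ht0, ht1⟩ := ht
  set z : Fin m → ℝ := fun i => t * u i + (1 - t) * w i with hz_def
  set f : (Fin m → ℝ) → ℝ := fun v => ∑ i, (1 / b i) * v i * (a i - Real.log (v i)) with hf
  set g : (Fin m → ℝ) → ℝ := fun v => 1 + ∑ j, v j with hg
  have hgpos : ∀ v : Fin m → ℝ, (∀ i, 0 < v i) → 0 < g v := by
    intro v hv
    have : (0 : ℝ) ≤ ∑ j, v j := Finset.sum_nonneg fun j _ => (hv j).le
    simp only [hg]; linarith
  have hgu := hgpos u hu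
  have hgw := hgpos w hw
  have hzpos : ∀ i, 0 < z i := fun i =>
    add_pos (mul_pos ht0 (hu i)) (mul_pos (by linarith) (hw i))
  have hgz := hgpos z hzpos
  set c : ℝ := min (R u) (R w) with hc
  -- lower bounds on numerators
  have hfu : c * g u ≤ f u := by
    have h1 : c ≤ f u / g u := by rw [← hR u]; exact min_le_left _ _
    calc c * g u ≤ (f u / g u) * g u := by
          exact mul_le_mul_of_nonneg_right h1 hgu.le
      _ = f u := div_mul_cancel₀ _ hgu.ne'
  have hfw : c * g w ≤ f w := by
    have h1 : c ≤ f w / g w := by rw [← hR w]; exact min_le_right _ _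
    calc c * g w ≤ (f w / g w) * g w := by
          exact mul_le_mul_of_nonneg_right h1 hgw.le
      _ = f w := div_mul_cancel₀ _ hgw.ne'
  -- strict concavity of numerator
  obtain ⟨i0, hi0⟩ := Function.ne_iff.mp hne
  have hnum : t * f u + (1 - t) * f w < f z := by
    have expand : t * f u + (1 - t) * f w =
        ∑ i, (t * ((1 / b i) * u i * (a i - Real.log (u i))) +
              (1 - t) * ((1 / b i) * w i * (a i - Real.log (w i)))) := by
      simp only [hf, Finset.mul_sum, Finset.sum_add_distrib]
    rw [expand]
    apply Finset.sum_lt_sum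
    · intro i _
      exact mnl_aux_le (1 / b i) (a i) t (u i) (w i)
        (by have := hb i; positivity) (hu i).le (hw i).le ht0.le ht1.le
    · exact ⟨i0, Finset.mem_univ i0,
        mnl_aux_lt (1 / b i0) (a i0) t (u i0) (w i0)
          (by have := hb i0; positivity) (hu i0).le (hw i0).le hi0 ht0 ht1⟩
  -- denominator is affine
  have hgzeq : g z = t * g u + (1 - t) * g w := by
    simp only [hg, hz_def, Finset.sum_add_distrib, ← Finset.mul_sum]
    ring
  have key : c * g z < f z := by
    have h1 : t * (c * g u) ≤ t * f u := mul_le_mul_of_nonneg_left hfu ht0.le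
    have h2 : (1 - t) * (c * g w) ≤ (1 - t) * f w :=
      mul_le_mul_of_nonneg_left hfw (by linarith)
    calc c * g z = t * (c * g u) + (1 - t) * (c * g w) := by rw [hgzeq]; ring
      _ ≤ t * f u + (1 - t) * f w := add_le_add h1 h2
      _ < f z := hnum
  have : c < f z / g z := (lt_div_iff₀ hgz).2 key
  rw [hR]
  exact this
end

section
/- Let m ≥ 1, and for each i ∈ {1,…,m} let a_i ∈ ℝ and b_i > 0. Define R(u) = (∑_{i=1}^m (1/b_i) · u_i · (a_i − ln u_i)) / (1 + ∑_{j=1}^m u_j) on the open positive orthant ℝ_{>0}^m. Then for every α ∈ ℝ, the superlevel set {u ∈ ℝ_{>0}^m : R(u) ≥ α} is a convex subset of ℝ^m. -/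
lemma term_concave_aux (a c x y s t : ℝ) (hc : 0 ≤ c) (hx : 0 ≤ x) (hy : 0 ≤ y)
    (hs : 0 ≤ s) (ht : 0 ≤ t) (hst : s + t = 1) :
    s * (c * x * (a - Real.log x)) + t * (c * y * (a - Real.log y)) ≤
      c * (s * x + t * y) * (a - Real.log (s * x + t * y)) := by
  have h := Real.convexOn_mul_log.2 hx hy hs ht hst
  simp only [smul_eq_mul] at h
  nlinarith [mul_le_mul_of_nonneg_left h hc]

/-- Every superlevel set of the transformed MNL revenue function
`R(u) = (∑ i, (1/b i) * u i * (a i - ln (u i))) / (1 + ∑ j, u j)`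
within the open positive orthant is convex. -/
theorem transformed_MNL_superlevel_sets_convex
    (m : ℕ) (hm : 1 ≤ m) (a b : Fin m → ℝ) (hb : ∀ i, 0 < b i)
    (R : (Fin m → ℝ) → ℝ)
    (hR : ∀ u : Fin m → ℝ,
      R u = (∑ i, (1 / b i) * u i * (a i - Real.log (u i))) / (1 + ∑ j, u j)) :
    ∀ α : ℝ, Convex ℝ {u : Fin m → ℝ | (∀ i, 0 < u i) ∧ α ≤ R u} := by
  intro α
  rintro u ⟨hupos, huα⟩ v ⟨hvpos, hvα⟩ s t hs ht hst
  have hw : ∀ i, (s • u + t • v) i = s * u i + t * v i := by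
    intro i; simp [smul_eq_mul]
  have hwpos : ∀ i, 0 < s * u i + t * v i := by
    intro i
    rcases eq_or_lt_of_le hs with h | h
    · have hts : t = 1 := by linarith
      simp [← h, hts, hvpos i]
    · exact add_pos_of_pos_of_nonneg (mul_pos h (hupos i))
        (mul_nonneg ht (hvpos i).le)
  have hsumpos : ∀ x : Fin m → ℝ, (∀ i, 0 < x i) → 0 < 1 + ∑ j, x j := by
    intro x hx
    have : (0:ℝ) ≤ ∑ j, x j := Finset.sum_nonneg fun j _ => (hx j).le
    linarith
  have hDu := hsumpos u hupos
  have hDv := hsumpos v hvpos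
  have hDw : 0 < 1 + ∑ j, (s • u + t • v) j := by
    have := hsumpos _ hwpos
    simpa [hw] using this
  rw [hR] at huα hvα
  have hNu : α * (1 + ∑ j, u j) ≤ ∑ i, (1 / b i) * u i * (a i - Real.log (u i)) :=
    (le_div_iff₀ hDu).mp huα
  have hNv : α * (1 + ∑ j, v j) ≤ ∑ i, (1 / b i) * v i * (a i - Real.log (v i)) :=
    (le_div_iff₀ hDv).mp hvα
  refine ⟨fun i => by simpa [hw] using hwpos i, ?_⟩
  rw [hR]
  rw [le_div_iff₀ hDw]
  have hN : s * (∑ i, (1 / b i) * u i * (a i - Real.log (u i)))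
      + t * (∑ i, (1 / b i) * v i * (a i - Real.log (v i)))
      ≤ ∑ i, (1 / b i) * (s • u + t • v) i * (a i - Real.log ((s • u + t • v) i)) := by
    rw [Finset.mul_sum, Finset.mul_sum, ← Finset.sum_add_distrib]
    refine Finset.sum_le_sum fun i _ => ?_
    rw [hw]
    exact term_concave_aux (a i) (1 / b i) (u i) (v i) s t
      (div_nonneg zero_le_one (hb i).le) (hupos i).le (hvpos i).le hs ht hst
  have hSw : ∑ j, (s • u + t • v) j = s * (∑ j, u j) + t * (∑ j, v j) := by
    simp only [hw]
    rw [Finset.sum_add_distrib, Finset.mul_sum, Finset.mul_sum]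
  have h1 : s * (α * (1 + ∑ j, u j)) ≤ s * (∑ i, (1 / b i) * u i * (a i - Real.log (u i))) :=
    mul_le_mul_of_nonneg_left hNu hs
  have h2 : t * (α * (1 + ∑ j, v j)) ≤ t * (∑ i, (1 / b i) * v i * (a i - Real.log (v i))) :=
    mul_le_mul_of_nonneg_left hNv ht
  have hDweq : α * (1 + ∑ j, (s • u + t • v) j)
      = s * (α * (1 + ∑ j, u j)) + t * (α * (1 + ∑ j, v j)) := by
    rw [hSw]; linear_combination (-α) * hst
  linarith
end
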